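/- arXiv:2201.04832 — 2 statements merged into one kernel-verified Lean document; each statement's English description precedes it below -/
import Mathlib

section
/- Let α > 0 and C > 0, let r : (0,∞) → ℝ be continuous with 0 < r(z) ≤ C z for all z > 0, let λ ≥ αC, and let f ∈ X_α. Then for every y > 0, |(1/r(y)) ∫₀^y exp(−λ ∫ₓ^y dτ/r(τ)) f(x) dx| ≤ ‖f‖_{X_α} / (y^α r(y)). -/
open MeasureTheory Set

/-! Since `r τ ≤ C τ`, the time `∫ₓ^y dτ / r τ` needed by the characteristics to travel from `x`
to `y` is at least `log (y / x) / C`; as `λ ≥ α C`, the kernel `exp (-λ ∫ₓ^y dτ / r τ)` is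
therefore at most `(x / y) ^ α`, and integrating `|f|` against `x ^ α` on `(0, y)` gives the
bound. -/

section GrowthKernel

variable {r : ℝ → ℝ} {C x y : ℝ}

theorem log_div_le_mul_integral_one_div (hx : 0 < x) (hxy : x ≤ y)
    (hr_cont : ContinuousOn r (Icc x y)) (hr_pos : ∀ τ ∈ Icc x y, 0 < r τ)
    (hr_le : ∀ τ ∈ Icc x y, r τ ≤ C * τ) :
    Real.log (y / x) ≤ C * ∫ τ in x..y, 1 / r τ := by
  have hpos : ∀ τ ∈ Icc x y, 0 < τ := fun τ hτ => hx.trans_le hτ.1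
  have hint_r : IntervalIntegrable (fun τ => 1 / r τ) volume x y :=
    (continuousOn_const.div hr_cont fun τ hτ => (hr_pos τ hτ).ne').intervalIntegrable_of_Icc hxy
  have hint_id : IntervalIntegrable (fun τ : ℝ => 1 / τ) volume x y :=
    (continuousOn_const.div continuousOn_id fun τ hτ => (hpos τ hτ).ne').intervalIntegrable_of_Icc
      hxy
  calc Real.log (y / x) = ∫ τ in x..y, 1 / τ := (integral_one_div_of_pos hx (hx.trans_le hxy)).symm
    _ ≤ ∫ τ in x..y, C * (1 / r τ) := by
      refine intervalIntegral.integral_mono_on hxy hint_id (hint_r.const_mul C) fun τ hτ => ?_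
      rw [mul_one_div, div_le_div_iff₀ (hpos τ hτ) (hr_pos τ hτ)]
      linarith [hr_le τ hτ]
    _ = C * ∫ τ in x..y, 1 / r τ := intervalIntegral.integral_const_mul C _

theorem exp_neg_mul_integral_one_div_le {α lam : ℝ} (hα : 0 ≤ α) (hlam : α * C ≤ lam)
    (hx : 0 < x) (hxy : x ≤ y) (hr_cont : ContinuousOn r (Icc x y))
    (hr_pos : ∀ τ ∈ Icc x y, 0 < r τ) (hr_le : ∀ τ ∈ Icc x y, r τ ≤ C * τ) :
    Real.exp (-(lam * ∫ τ in x..y, 1 / r τ)) ≤ x ^ α / y ^ α := by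
  set I := ∫ τ in x..y, 1 / r τ
  have hI : 0 ≤ I :=
    intervalIntegral.integral_nonneg hxy fun τ hτ => (one_div_pos.2 (hr_pos τ hτ)).le
  have hlog := log_div_le_mul_integral_one_div hx hxy hr_cont hr_pos hr_le
  have hexponent : -(lam * I) ≤ Real.log (x / y) * α := by
    rw [← inv_div, Real.log_inv]
    calc -(lam * I) ≤ -(α * C * I) := neg_le_neg (mul_le_mul_of_nonneg_right hlam hI)
      _ = -(α * (C * I)) := by ring
      _ ≤ -Real.log (y / x) * α := by linarith [mul_le_mul_of_nonneg_left hlog hα]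
  calc Real.exp (-(lam * I)) ≤ Real.exp (Real.log (x / y) * α) := Real.exp_le_exp.2 hexponent
    _ = x ^ α / y ^ α := by
      rw [← Real.rpow_def_of_pos (div_pos hx (hx.trans_le hxy)),
        Real.div_rpow hx.le (hx.le.trans hxy)]

end GrowthKernel

theorem abs_setIntegral_Ioo_mul_le {α y : ℝ} (hy : 0 ≤ y) {K f : ℝ → ℝ}
    (hK : ∀ x ∈ Ioo 0 y, |K x| ≤ x ^ α / y ^ α)
    (hf_int : IntegrableOn (fun x => |f x| * x ^ α) (Ioi 0)) :
    |∫ x in Ioo 0 y, K x * f x| ≤ (∫ x in Ioi 0, |f x| * x ^ α) / y ^ α := by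
  have hbound : ∀ᵐ x ∂volume.restrict (Ioo 0 y), ‖K x * f x‖ ≤ |f x| * x ^ α / y ^ α := by
    filter_upwards [ae_restrict_mem measurableSet_Ioo] with x hx
    rw [Real.norm_eq_abs, abs_mul, mul_comm, mul_div_assoc]
    exact mul_le_mul_of_nonneg_left (hK x hx) (abs_nonneg _)
  calc |∫ x in Ioo 0 y, K x * f x| ≤ ∫ x in Ioo 0 y, |f x| * x ^ α / y ^ α :=
        norm_integral_le_of_norm_le ((hf_int.mono_set Ioo_subset_Ioi_self).div_const _) hbound
    _ = (∫ x in Ioo 0 y, |f x| * x ^ α) / y ^ α := integral_div _ _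
    _ ≤ (∫ x in Ioi 0, |f x| * x ^ α) / y ^ α := by
      refine div_le_div_of_nonneg_right ?_ (Real.rpow_nonneg hy α)
      refine setIntegral_mono_set hf_int ?_ Ioo_subset_Ioi_self.eventuallyLE
      filter_upwards [ae_restrict_mem measurableSet_Ioi] with x (hx : 0 < x)
      positivity

theorem stmt3_general (α C : ℝ) (hα : 0 < α) (r : ℝ → ℝ)
    (hr_cont : ContinuousOn r (Ioi (0 : ℝ)))
    (hr_pos : ∀ z > (0 : ℝ), 0 < r z) (hr_le : ∀ z > (0 : ℝ), r z ≤ C * z)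
    (lam : ℝ) (hlam : α * C ≤ lam)
    (f : ℝ → ℝ)
    (hf_int : IntegrableOn (fun x => |f x| * x ^ α) (Ioi (0 : ℝ))) :
    ∀ y > (0 : ℝ),
      |(1 / r y) * ∫ x in Ioo (0 : ℝ) y, Real.exp (-(lam * ∫ τ in x..y, 1 / r τ)) * f x|
        ≤ (∫ x in Ioi (0 : ℝ), |f x| * x ^ α) / (y ^ α * r y) := by
  intro y hy
  have hkernel : ∀ x ∈ Ioo 0 y, |Real.exp (-(lam * ∫ τ in x..y, 1 / r τ))| ≤ x ^ α / y ^ α := by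
    intro x hx
    have hIcc : Icc x y ⊆ Ioi 0 := fun τ hτ => hx.1.trans_le hτ.1
    rw [abs_of_pos (Real.exp_pos _)]
    exact exp_neg_mul_integral_one_div_le hα.le hlam hx.1 hx.2.le (hr_cont.mono hIcc)
      (fun τ hτ => hr_pos τ (hIcc hτ)) (fun τ hτ => hr_le τ (hIcc hτ))
  rw [abs_mul, abs_of_pos (one_div_pos.2 (hr_pos y hy))]
  calc 1 / r y * |∫ x in Ioo 0 y, Real.exp (-(lam * ∫ τ in x..y, 1 / r τ)) * f x|
      ≤ 1 / r y * ((∫ x in Ioi 0, |f x| * x ^ α) / y ^ α) := by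
        gcongr
        · exact (one_div_pos.2 (hr_pos y hy)).le
        · exact abs_setIntegral_Ioo_mul_le hy.le hkernel hf_int
    _ = (∫ x in Ioi 0, |f x| * x ^ α) / (y ^ α * r y) := by ring

/-- Pointwise estimate for the resolvent of the growth semigroup in
`X_α = L¹((0,∞), x^α dx)`: if `0 < r(z) ≤ C z` and `λ ≥ αC`, then for every `y > 0`,
`|(1/r(y)) ∫₀^y exp(−λ ∫ₓ^y dτ/r(τ)) f(x) dx| ≤ ‖f‖_{X_α} / (y^α r(y))`. -/
theorem stmt3 (α C : ℝ) (hα : 0 < α) (hC : 0 < C) (r : ℝ → ℝ)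
    (hr_cont : ContinuousOn r (Ioi (0 : ℝ)))
    (hr_pos : ∀ z > (0 : ℝ), 0 < r z) (hr_le : ∀ z > (0 : ℝ), r z ≤ C * z)
    (lam : ℝ) (hlam : α * C ≤ lam)
    (f : ℝ → ℝ) (hf_meas : Measurable f)
    (hf_int : IntegrableOn (fun x => |f x| * x ^ α) (Ioi (0 : ℝ))) :
    ∀ y > (0 : ℝ),
      |(1 / r y) * ∫ x in Ioo (0 : ℝ) y, Real.exp (-(lam * ∫ τ in x..y, 1 / r τ)) * f x|
        ≤ (∫ x in Ioi (0 : ℝ), |f x| * x ^ α) / (y ^ α * r y) :=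
  stmt3_general α C hα r hr_cont hr_pos hr_le lam hlam f hf_int
end

section
/- Let α > 0 and C > 0, let r : (0,∞) → ℝ be continuous with 0 < r(z) ≤ C z for all z > 0, let a : (0,∞) → [0,∞) be locally integrable, let λ ≥ αC, and let f : (0,∞) → [0,∞) be measurable with ∫₀^∞ f(x) x^α dx < ∞. Then ∫₀^∞ (R_λ f)(y) · a(y) · y^α dy ≤ ∫₀^∞ f(x) x^α dx. -/
/-!
After Tonelli, it suffices to show, for each `x > 0`, that
`∫ₓ^∞ k(x, y) a(y) y^α / r(y) dy ≤ x^α` with `k(x, y) = exp (-∫ₓ^y (λ + a)/r)`.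
Since `r(τ) ≤ C τ` and `λ ≥ α C`, we have `λ / r(τ) ≥ α / τ`, so the `λ`-part of `k` absorbs the
growth of the weight: `exp (-∫ₓ^y λ/r) y^α ≤ x^α`. What remains is `∫ₓ^∞ φ e^{-Φ}` with
`φ = a/r ≥ 0` and `Φ(y) = ∫ₓ^y φ`, which is at most `1` because `e^{-Φ}` is absolutely continuous
with derivative `-φ e^{-Φ}` almost everywhere.
-/

open MeasureTheory Set
open scoped ENNReal NNReal

theorem LipschitzOnWith.comp_absolutelyContinuousOnInterval {X Y : Type*} [PseudoMetricSpace X]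
    [PseudoMetricSpace Y] {g : X → Y} {f : ℝ → X} {K : ℝ≥0} {s : Set X} {a b : ℝ}
    (hg : LipschitzOnWith K g s) (hf : AbsolutelyContinuousOnInterval f a b)
    (hfs : MapsTo f (uIcc a b) s) : AbsolutelyContinuousOnInterval (g ∘ f) a b := by
  rw [absolutelyContinuousOnInterval_iff] at hf ⊢
  intro ε hε
  obtain ⟨δ, hδ, hfδ⟩ := hf (ε / (K + 1)) (by positivity)
  refine ⟨δ, hδ, fun E hE hsum => ?_⟩
  calc ∑ i ∈ Finset.range E.1, dist (g (f (E.2 i).1)) (g (f (E.2 i).2))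
      ≤ ∑ i ∈ Finset.range E.1, K * dist (f (E.2 i).1) (f (E.2 i).2) :=
        Finset.sum_le_sum fun i hi =>
          hg.dist_le_mul _ (hfs (hE.1 i hi).1) _ (hfs (hE.1 i hi).2)
    _ = K * ∑ i ∈ Finset.range E.1, dist (f (E.2 i).1) (f (E.2 i).2) :=
        (Finset.mul_sum ..).symm
    _ ≤ K * (ε / (K + 1)) := by gcongr; exact (hfδ E hE hsum).le
    _ < ε := by
        rw [mul_div_assoc', div_lt_iff₀ (by positivity)]
        nlinarith

theorem ContDiff.comp_absolutelyContinuousOnInterval {g f : ℝ → ℝ} {a b : ℝ}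
    (hg : ContDiff ℝ 1 g) (hf : AbsolutelyContinuousOnInterval f a b) :
    AbsolutelyContinuousOnInterval (g ∘ f) a b := by
  obtain ⟨M, hM⟩ := hf.exists_bound
  obtain ⟨K, hK⟩ := hg.contDiffOn.exists_lipschitzOnWith one_ne_zero (convex_Icc (-M) M)
    isCompact_Icc
  exact hK.comp_absolutelyContinuousOnInterval hf fun x hx => abs_le.mp (hM x hx)

theorem integral_mul_exp_neg_integral {φ : ℝ → ℝ} {a b : ℝ}
    (hφ : IntervalIntegrable φ volume a b) :
    ∫ y in a..b, φ y * Real.exp (-∫ τ in a..y, φ τ) = 1 - Real.exp (-∫ τ in a..b, φ τ) := by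
  set G : ℝ → ℝ := fun y => Real.exp (-∫ τ in a..y, φ τ)
  have hG : AbsolutelyContinuousOnInterval G a b :=
    (Real.contDiff_exp.comp contDiff_neg).comp_absolutelyContinuousOnInterval
      (hφ.absolutelyContinuousOnInterval_intervalIntegral left_mem_uIcc)
  have hderiv : ∀ᵐ y, y ∈ uIoc a b → φ y * G y = -deriv G y := by
    filter_upwards [hφ.ae_hasDerivAt_integral] with y hy hyab
    rw [(hy (uIoc_subset_uIcc hyab) a left_mem_uIcc).fun_neg.exp.deriv]
    ring
  rw [intervalIntegral.integral_congr_ae hderiv, intervalIntegral.integral_neg,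
    hG.integral_deriv_eq_sub]
  simp [G]

theorem MeasureTheory.LocallyIntegrableOn.intervalIntegrable_of_uIcc_subset {g : ℝ → ℝ}
    {s : Set ℝ} {u v : ℝ} (hg : LocallyIntegrableOn g s) (h : uIcc u v ⊆ s) :
    IntervalIntegrable g volume u v :=
  (intervalIntegrable_iff').2 (hg.integrableOn_compact_subset h isCompact_uIcc)

theorem MeasureTheory.LocallyIntegrableOn.div_continuousOn {g r : ℝ → ℝ} {s : Set ℝ}
    (hg : LocallyIntegrableOn g s) (hr : ContinuousOn r s) (hr0 : ∀ z ∈ s, r z ≠ 0)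
    (hs : IsLocallyClosed s) : LocallyIntegrableOn (fun z => g z / r z) s := by
  simpa only [div_eq_mul_inv, Pi.inv_apply] using hg.mul_continuousOn (hr.inv₀ hr0) hs

theorem MeasureTheory.LocallyIntegrableOn.continuousOn_intervalIntegral {ψ : ℝ → ℝ} {b c : ℝ}
    (hψ : LocallyIntegrableOn ψ (Ioi c)) (hb : c < b) :
    ContinuousOn (fun z => ∫ τ in b..z, ψ τ) (Ioi c) := by
  intro z hz
  obtain ⟨u, hcu, hu⟩ := exists_between (lt_min hb hz)
  have huv : u ≤ max b z + 1 := by linarith [min_le_max (a := b) (b := z)]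
  have hsub : uIcc u (max b z + 1) ⊆ Ioi c := by
    rw [uIcc_of_le huv]; exact fun w hw => hcu.trans_le hw.1
  have hb_mem : b ∈ uIcc u (max b z + 1) := by
    rw [uIcc_of_le huv]
    exact ⟨(hu.trans_le (min_le_left _ _)).le, by linarith [le_max_left b z]⟩
  have hcont := intervalIntegral.continuousOn_primitive_interval'
    (hψ.intervalIntegrable_of_uIcc_subset hsub) hb_mem
  rw [uIcc_of_le huv] at hcont
  exact (hcont.continuousAt (Icc_mem_nhds (hu.trans_le (min_le_right _ _))
    (by linarith [le_max_right b z]))).continuousWithinAt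

theorem MeasureTheory.LocallyIntegrableOn.continuousOn_intervalIntegral_prod {ψ : ℝ → ℝ}
    {c : ℝ} (hψ : LocallyIntegrableOn ψ (Ioi c)) :
    ContinuousOn (fun p : ℝ × ℝ => ∫ τ in p.1..p.2, ψ τ) (Ioi c ×ˢ Ioi c) := by
  have hP := hψ.continuousOn_intervalIntegral (lt_add_one c)
  refine ((hP.comp continuousOn_snd fun p hp => hp.2).sub
    (hP.comp continuousOn_fst fun p hp => hp.1)).congr fun p hp => ?_
  have hint (z : ℝ) (hz : c < z) : IntervalIntegrable ψ volume (c + 1) z :=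
    hψ.intervalIntegrable_of_uIcc_subset fun w hw =>
      lt_of_lt_of_le (lt_min (lt_add_one c) hz) hw.1
  exact (intervalIntegral.integral_interval_sub_left (hint _ hp.2) (hint _ hp.1)).symm

theorem lintegral_mul_exp_neg_integral_le_one {φ : ℝ → ℝ} {x : ℝ}
    (hφ : LocallyIntegrableOn φ (Ici x)) (hφ_nonneg : ∀ y > x, 0 ≤ φ y) :
    ∫⁻ y in Ioi x, ENNReal.ofReal (φ y * Real.exp (-∫ τ in x..y, φ τ)) ≤ 1 := by
  have hcover : ⋃ n : ℕ, Ioc x (x + n) = Ioi x :=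
    iUnion_Ioc_eq_Ioi_self_iff.2 fun y _ =>
      (exists_nat_ge (y - x)).imp fun n hn => by linarith
  have hmono : Monotone fun n : ℕ => Ioc x (x + n) := fun m n hmn =>
    Ioc_subset_Ioc_right (by gcongr)
  rw [← hcover, setLIntegral_iUnion_of_directed _ hmono.directed_le]
  refine iSup_le fun n => ?_
  have hxb : x ≤ x + n := by simp
  have hint : IntervalIntegrable φ volume x (x + n) :=
    hφ.intervalIntegrable_of_uIcc_subset (by rw [uIcc_of_le hxb]; exact Icc_subset_Ici_self)
  have hint' : IntegrableOn (fun y => φ y * Real.exp (-∫ τ in x..y, φ τ)) (Ioc x (x + n)) :=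
    (hint.mul_continuousOn
      (intervalIntegral.continuousOn_primitive_interval' hint left_mem_uIcc).neg.rexp).1
  have hnonneg : 0 ≤ᵐ[volume.restrict (Ioc x (x + n))]
      fun y => φ y * Real.exp (-∫ τ in x..y, φ τ) :=
    (ae_restrict_iff' measurableSet_Ioc).2 <| ae_of_all _ fun y hy =>
      mul_nonneg (hφ_nonneg y hy.1) (Real.exp_pos _).le
  rw [← ofReal_integral_eq_lintegral_ofReal hint' hnonneg,
    ← intervalIntegral.integral_of_le hxb, integral_mul_exp_neg_integral hint]
  exact ENNReal.ofReal_le_one.2 (by linarith [Real.exp_pos (-∫ τ in x..x + n, φ τ)])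

theorem ofReal_integral_le_lintegral_ofReal {X : Type*} [MeasurableSpace X] {μ : Measure X}
    {g : X → ℝ} (hg : 0 ≤ᵐ[μ] g) :
    ENNReal.ofReal (∫ x, g x ∂μ) ≤ ∫⁻ x, ENNReal.ofReal (g x) ∂μ :=
  calc ENNReal.ofReal (∫ x, g x ∂μ) ≤ ‖∫ x, g x ∂μ‖ₑ := by
        rw [Real.enorm_eq_ofReal_abs]; exact ENNReal.ofReal_le_ofReal (le_abs_self _)
    _ ≤ ∫⁻ x, ‖g x‖ₑ ∂μ := enorm_integral_le_lintegral_enorm g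
    _ = ∫⁻ x, ENNReal.ofReal (g x) ∂μ :=
        lintegral_congr_ae (hg.mono fun x hx => Real.enorm_of_nonneg hx)

theorem lintegral_Ioi_lintegral_Ioo_swap {c : ℝ} {G : ℝ → ℝ → ℝ≥0∞}
    (hG : AEMeasurable (Function.uncurry G)
      ((volume.restrict (Ioi c)).prod (volume.restrict (Ioi c)))) :
    ∫⁻ y in Ioi c, ∫⁻ x in Ioo c y, G x y = ∫⁻ x in Ioi c, ∫⁻ y in Ioi x, G x y := by
  set F : ℝ → ℝ → ℝ≥0∞ := fun x y =>
    {p : ℝ × ℝ | p.1 < p.2}.indicator (Function.uncurry G) (x, y)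
  have hF : AEMeasurable (Function.uncurry F)
      ((volume.restrict (Ioi c)).prod (volume.restrict (Ioi c))) :=
    hG.indicator (measurableSet_lt measurable_fst measurable_snd)
  have h₁ (y : ℝ) : ∫⁻ x in Ioo c y, G x y = ∫⁻ x in Ioi c, F x y := by
    rw [← Ioi_inter_Iio, inter_comm, ← setLIntegral_indicator measurableSet_Iio]
    rfl
  have h₂ (x : ℝ) (hx : x ∈ Ioi c) : ∫⁻ y in Ioi x, G x y = ∫⁻ y in Ioi c, F x y := by
    rw [← inter_eq_left.2 (Ioi_subset_Ioi (le_of_lt hx)),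
      ← setLIntegral_indicator measurableSet_Ioi]
    rfl
  simp_rw [h₁]
  rw [← lintegral_lintegral_swap hF, setLIntegral_congr_fun measurableSet_Ioi h₂]

section Resolvent

variable {α C lam : ℝ} {a r : ℝ → ℝ}

theorem mul_log_div_le_integral_div (hα : 0 ≤ α) (hr_cont : ContinuousOn r (Ioi 0))
    (hr_pos : ∀ z > (0 : ℝ), 0 < r z) (hr_le : ∀ z > (0 : ℝ), r z ≤ C * z)
    (hlam : α * C ≤ lam) {x y : ℝ} (hx : 0 < x) (hxy : x ≤ y) :
    α * Real.log (y / x) ≤ ∫ τ in x..y, lam / r τ := by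
  have hsub : uIcc x y ⊆ Ioi 0 := by
    rw [uIcc_of_le hxy]; exact fun z hz => hx.trans_le hz.1
  have h0 : (0 : ℝ) ∉ uIcc x y := fun h => lt_irrefl (0 : ℝ) (hsub h)
  rw [← integral_inv h0, ← intervalIntegral.integral_const_mul]
  refine intervalIntegral.integral_mono_on hxy
    (continuousOn_const.mul (continuousOn_inv₀.mono fun z hz => (hsub hz).ne')).intervalIntegrable
    (continuousOn_const.div (hr_cont.mono hsub)
      fun z hz => (hr_pos z (hsub hz)).ne').intervalIntegrable
    fun τ hτ => ?_
  have hτ0 : 0 < τ := hx.trans_le hτ.1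
  rw [← div_eq_mul_inv, div_le_div_iff₀ hτ0 (hr_pos τ hτ0)]
  nlinarith [mul_le_mul_of_nonneg_left (hr_le τ hτ0) hα]

theorem exp_neg_integral_div_mul_rpow_le (hα : 0 ≤ α) (hr_cont : ContinuousOn r (Ioi 0))
    (hr_pos : ∀ z > (0 : ℝ), 0 < r z) (hr_le : ∀ z > (0 : ℝ), r z ≤ C * z)
    (hlam : α * C ≤ lam) {x y : ℝ} (hx : 0 < x) (hxy : x ≤ y) :
    Real.exp (-∫ τ in x..y, lam / r τ) * y ^ α ≤ x ^ α := by
  have hlog := mul_log_div_le_integral_div hα hr_cont hr_pos hr_le hlam hx hxy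
  rw [Real.log_div (hx.trans_le hxy).ne' hx.ne'] at hlog
  rw [Real.rpow_def_of_pos (hx.trans_le hxy), Real.rpow_def_of_pos hx, ← Real.exp_add,
    Real.exp_le_exp]
  linarith

noncomputable def resolventKernel (lam : ℝ) (a r : ℝ → ℝ) (x y : ℝ) : ℝ :=
  Real.exp (-∫ τ in x..y, (lam + a τ) / r τ)

theorem resolventKernel_mul_rpow_le (hα : 0 ≤ α) (hr_cont : ContinuousOn r (Ioi 0))
    (hr_pos : ∀ z > (0 : ℝ), 0 < r z) (hr_le : ∀ z > (0 : ℝ), r z ≤ C * z)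
    (ha_loc : LocallyIntegrableOn a (Ioi 0)) (hlam : α * C ≤ lam) {x y : ℝ} (hx : 0 < x)
    (hxy : x ≤ y) :
    resolventKernel lam a r x y * y ^ α ≤ x ^ α * Real.exp (-∫ τ in x..y, a τ / r τ) := by
  have hsub : uIcc x y ⊆ Ioi 0 := by
    rw [uIcc_of_le hxy]; exact fun z hz => hx.trans_le hz.1
  have hr0 : ∀ z ∈ Ioi (0 : ℝ), r z ≠ 0 := fun z hz => (hr_pos z hz).ne'
  have hlam_int : IntervalIntegrable (fun τ => lam / r τ) volume x y :=
    ((locallyIntegrableOn_const lam).div_continuousOn hr_cont hr0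
      isOpen_Ioi.isLocallyClosed).intervalIntegrable_of_uIcc_subset hsub
  have ha_int : IntervalIntegrable (fun τ => a τ / r τ) volume x y :=
    (ha_loc.div_continuousOn hr_cont hr0
      isOpen_Ioi.isLocallyClosed).intervalIntegrable_of_uIcc_subset hsub
  have hsplit : ∫ τ in x..y, (lam + a τ) / r τ
      = (∫ τ in x..y, lam / r τ) + ∫ τ in x..y, a τ / r τ := by
    simp_rw [add_div]; exact intervalIntegral.integral_add hlam_int ha_int
  rw [resolventKernel, hsplit, neg_add, Real.exp_add, mul_right_comm]
  exact mul_le_mul_of_nonneg_right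
    (exp_neg_integral_div_mul_rpow_le hα hr_cont hr_pos hr_le hlam hx hxy) (Real.exp_pos _).le

theorem lintegral_resolventKernel_le (hα : 0 ≤ α) (hr_cont : ContinuousOn r (Ioi 0))
    (hr_pos : ∀ z > (0 : ℝ), 0 < r z) (hr_le : ∀ z > (0 : ℝ), r z ≤ C * z)
    (ha_nonneg : ∀ z > (0 : ℝ), 0 ≤ a z) (ha_loc : LocallyIntegrableOn a (Ioi 0))
    (hlam : α * C ≤ lam) {x : ℝ} (hx : 0 < x) :
    ∫⁻ y in Ioi x, ENNReal.ofReal (resolventKernel lam a r x y * (a y * y ^ α / r y))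
      ≤ ENNReal.ofReal (x ^ α) := by
  have hφ_nonneg : ∀ y > x, 0 ≤ a y / r y := fun y hy =>
    div_nonneg (ha_nonneg y (hx.trans hy)) (hr_pos y (hx.trans hy)).le
  have hφ : LocallyIntegrableOn (fun τ => a τ / r τ) (Ici x) :=
    (ha_loc.div_continuousOn hr_cont (fun z hz => (hr_pos z hz).ne')
      isOpen_Ioi.isLocallyClosed).mono_set (Ici_subset_Ioi.2 hx)
  calc ∫⁻ y in Ioi x, ENNReal.ofReal (resolventKernel lam a r x y * (a y * y ^ α / r y))
      ≤ ∫⁻ y in Ioi x, ENNReal.ofReal (x ^ α) *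
          ENNReal.ofReal (a y / r y * Real.exp (-∫ τ in x..y, a τ / r τ)) := by
        refine setLIntegral_mono' measurableSet_Ioi fun y hy => ?_
        rw [← ENNReal.ofReal_mul (by positivity)]
        refine ENNReal.ofReal_le_ofReal ?_
        calc resolventKernel lam a r x y * (a y * y ^ α / r y)
            = a y / r y * (resolventKernel lam a r x y * y ^ α) := by ring
          _ ≤ a y / r y * (x ^ α * Real.exp (-∫ τ in x..y, a τ / r τ)) :=
            mul_le_mul_of_nonneg_left
              (resolventKernel_mul_rpow_le hα hr_cont hr_pos hr_le ha_loc hlam hx hy.le)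
              (hφ_nonneg y hy)
          _ = x ^ α * (a y / r y * Real.exp (-∫ τ in x..y, a τ / r τ)) := by ring
    _ = ENNReal.ofReal (x ^ α) *
          ∫⁻ y in Ioi x, ENNReal.ofReal (a y / r y * Real.exp (-∫ τ in x..y, a τ / r τ)) :=
        lintegral_const_mul' _ _ ENNReal.ofReal_ne_top
    _ ≤ ENNReal.ofReal (x ^ α) :=
        mul_le_of_le_one_right' (lintegral_mul_exp_neg_integral_le_one hφ hφ_nonneg)

theorem aemeasurable_resolventKernel_integrand (hr_cont : ContinuousOn r (Ioi 0))
    (hr_pos : ∀ z > (0 : ℝ), 0 < r z) (ha_meas : Measurable a)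
    (ha_loc : LocallyIntegrableOn a (Ioi 0)) {f : ℝ → ℝ} (hf_meas : Measurable f) :
    AEMeasurable
      (fun p : ℝ × ℝ => ENNReal.ofReal
        (f p.1 * (resolventKernel lam a r p.1 p.2 * (a p.2 * p.2 ^ α / r p.2))))
      ((volume.restrict (Ioi 0)).prod (volume.restrict (Ioi 0))) := by
  rw [Measure.prod_restrict]
  have hquad : MeasurableSet (Ioi (0 : ℝ) ×ˢ Ioi (0 : ℝ)) :=
    measurableSet_Ioi.prod measurableSet_Ioi
  have hψ : LocallyIntegrableOn (fun τ => (lam + a τ) / r τ) (Ioi 0) :=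
    ((locallyIntegrableOn_const lam).add ha_loc).div_continuousOn hr_cont
      (fun z hz => (hr_pos z hz).ne') isOpen_Ioi.isLocallyClosed
  have hK : AEMeasurable (fun p : ℝ × ℝ => resolventKernel lam a r p.1 p.2)
      ((volume.prod volume).restrict (Ioi 0 ×ˢ Ioi 0)) :=
    hψ.continuousOn_intervalIntegral_prod.neg.rexp.aemeasurable hquad
  have hr : AEMeasurable (fun p : ℝ × ℝ => r p.2)
      ((volume.prod volume).restrict (Ioi 0 ×ˢ Ioi 0)) :=
    (hr_cont.comp continuousOn_snd fun p hp => hp.2).aemeasurable hquad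
  have hw : Measurable fun p : ℝ × ℝ => a p.2 * p.2 ^ α :=
    (ha_meas.comp measurable_snd).mul (measurable_snd.pow_const α)
  exact ((hf_meas.comp measurable_fst).aemeasurable.mul
    (hK.mul (hw.aemeasurable.div hr))).ennreal_ofReal

theorem ofReal_resolvent_le_lintegral (hr_pos : ∀ z > (0 : ℝ), 0 < r z)
    (ha_nonneg : ∀ z > (0 : ℝ), 0 ≤ a z) {f : ℝ → ℝ} (hf_nonneg : ∀ z > (0 : ℝ), 0 ≤ f z)
    {y : ℝ} (hy : 0 < y) :
    ENNReal.ofReal (((1 / r y) * ∫ x in Ioo 0 y,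
        Real.exp (-∫ τ in x..y, (lam + a τ) / r τ) * f x) * a y * y ^ α)
      ≤ ∫⁻ x in Ioo 0 y, ENNReal.ofReal
          (f x * (resolventKernel lam a r x y * (a y * y ^ α / r y))) := by
  have hw : 0 ≤ a y * y ^ α / r y := div_nonneg
    (mul_nonneg (ha_nonneg y hy) (Real.rpow_nonneg hy.le α)) (hr_pos y hy).le
  have heq : ((1 / r y) * ∫ x in Ioo 0 y,
      Real.exp (-∫ τ in x..y, (lam + a τ) / r τ) * f x) * a y * y ^ α
      = ∫ x in Ioo 0 y, f x * (resolventKernel lam a r x y * (a y * y ^ α / r y)) := by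
    calc _ = (∫ x in Ioo 0 y, Real.exp (-∫ τ in x..y, (lam + a τ) / r τ) * f x)
          * (a y * y ^ α / r y) := by ring
      _ = _ := by
        rw [← integral_mul_const]
        exact integral_congr_ae (ae_of_all _ fun x => by simp only [resolventKernel]; ring)
  rw [heq]
  exact ofReal_integral_le_lintegral_ofReal <| (ae_restrict_iff' measurableSet_Ioo).2 <|
    ae_of_all _ fun x hx => mul_nonneg (hf_nonneg x hx.1) (mul_nonneg (Real.exp_pos _).le hw)

end Resolvent

theorem stmt4_general (α C : ℝ) (hα : 0 < α) (r : ℝ → ℝ)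
    (hr_cont : ContinuousOn r (Ioi (0 : ℝ)))
    (hr_pos : ∀ z > (0 : ℝ), 0 < r z) (hr_le : ∀ z > (0 : ℝ), r z ≤ C * z)
    (a : ℝ → ℝ) (ha_meas : Measurable a) (ha_nonneg : ∀ x > (0 : ℝ), 0 ≤ a x)
    (ha_loc : LocallyIntegrableOn a (Ioi (0 : ℝ)))
    (lam : ℝ) (hlam : α * C ≤ lam)
    (f : ℝ → ℝ) (hf_meas : Measurable f) (hf_nonneg : ∀ x > (0 : ℝ), 0 ≤ f x) :
    ∫⁻ y in Ioi (0 : ℝ),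
        ENNReal.ofReal
          (((1 / r y) * ∫ x in Ioo (0 : ℝ) y,
              Real.exp (-(∫ τ in x..y, (lam + a τ) / r τ)) * f x) * a y * y ^ α)
      ≤ ∫⁻ x in Ioi (0 : ℝ), ENNReal.ofReal (f x * x ^ α) := by
  calc _ ≤ ∫⁻ y in Ioi 0, ∫⁻ x in Ioo 0 y, ENNReal.ofReal
          (f x * (resolventKernel lam a r x y * (a y * y ^ α / r y))) :=
        setLIntegral_mono' measurableSet_Ioi fun y hy =>
          ofReal_resolvent_le_lintegral hr_pos ha_nonneg hf_nonneg hy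
    _ = ∫⁻ x in Ioi 0, ∫⁻ y in Ioi x, ENNReal.ofReal
          (f x * (resolventKernel lam a r x y * (a y * y ^ α / r y))) :=
        lintegral_Ioi_lintegral_Ioo_swap
          (aemeasurable_resolventKernel_integrand hr_cont hr_pos ha_meas ha_loc hf_meas)
    _ ≤ ∫⁻ x in Ioi 0, ENNReal.ofReal (f x * x ^ α) := by
        refine setLIntegral_mono' measurableSet_Ioi fun x hx => ?_
        simp_rw [ENNReal.ofReal_mul (hf_nonneg x hx)]
        rw [lintegral_const_mul' _ _ ENNReal.ofReal_ne_top]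
        gcongr
        exact lintegral_resolventKernel_le hα.le hr_cont hr_pos hr_le ha_nonneg ha_loc hlam hx

/-- Smoothing effect of the resolvent of the growth–absorption semigroup in
`X_α = L¹((0,∞), x^α dx)`: if `0 < r(z) ≤ C z`, `a ≥ 0` is locally integrable on `(0,∞)`,
`λ ≥ αC` and `f ≥ 0` has finite `X_α`-norm, then
`∫₀^∞ (R_λ f)(y) a(y) y^α dy ≤ ∫₀^∞ f(x) x^α dx`, where
`(R_λ f)(y) = (1/r(y)) ∫₀^y exp(−∫ₓ^y (λ+a(τ))/r(τ) dτ) f(x) dx`. -/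
theorem stmt4 (α C : ℝ) (hα : 0 < α) (hC : 0 < C) (r : ℝ → ℝ)
    (hr_cont : ContinuousOn r (Ioi (0 : ℝ)))
    (hr_pos : ∀ z > (0 : ℝ), 0 < r z) (hr_le : ∀ z > (0 : ℝ), r z ≤ C * z)
    (a : ℝ → ℝ) (ha_meas : Measurable a) (ha_nonneg : ∀ x > (0 : ℝ), 0 ≤ a x)
    (ha_loc : LocallyIntegrableOn a (Ioi (0 : ℝ)))
    (lam : ℝ) (hlam : α * C ≤ lam)
    (f : ℝ → ℝ) (hf_meas : Measurable f) (hf_nonneg : ∀ x > (0 : ℝ), 0 ≤ f x)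
    (hf_int : ∫⁻ x in Ioi (0 : ℝ), ENNReal.ofReal (f x * x ^ α) < ⊤) :
    ∫⁻ y in Ioi (0 : ℝ),
        ENNReal.ofReal
          (((1 / r y) * ∫ x in Ioo (0 : ℝ) y,
              Real.exp (-(∫ τ in x..y, (lam + a τ) / r τ)) * f x) * a y * y ^ α)
      ≤ ∫⁻ x in Ioi (0 : ℝ), ENNReal.ofReal (f x * x ^ α) :=
  stmt4_general α C hα r hr_cont hr_pos hr_le a ha_meas ha_nonneg ha_loc lam hlam f hf_meas
    hf_nonneg
end
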